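/- Let n ≥ 1, let m be an integer with m ≥ n + 1, and let a be a residue modulo m. If x and y are distinct binary words of length n with σ(x) ≡ a (mod m) and σ(y) ≡ a (mod m), then no binary word of length n − 1 is a common subsequence of both x and y; that is, the Varshamov–Tenengolts code {x ∈ {0,1}^n : σ(x) ≡ a (mod m)} corrects a single deletion. -/

import Mathlib

/-!
If `w` arises from `x` by deleting one bit, then `x` is `w` with a bit `b` inserted at some
position `k`, and `σ(x) = σ(w) + g` where the gain `g` = (number of ones of `w` behind position
`k`) + `(k + 1) b` lies between `0` and `n`. As `m > n`, equal residues of `σ(x)` and `σ(y)` force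
equal gains. Equal gains force the two inserted bits to agree and the stretch of `w` between the
two insertion positions to consist of that same bit only, so both insertions give the same word.
-/

/-- The moment of a binary word `x = x_1 … x_n`: `σ(x) = ∑ i, i * x_i` (1-based indexing). -/
def mom {n : ℕ} (x : Fin n → Bool) : ℕ :=
  ∑ i : Fin n, ((i : ℕ) + 1) * (if x i then 1 else 0)

namespace List

variable {α : Type*}

theorem exists_eq_take_append_cons_drop_of_sublist {w l : List α} (h : w <+ l)
    (hl : l.length = w.length + 1) : ∃ k ≤ w.length, ∃ b, l = w.take k ++ b :: w.drop k := by
  induction h with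
  | slnil => simp at hl
  | @cons w l a h _ =>
    obtain rfl : w = l := h.eq_of_length (by simpa using hl.symm)
    exact ⟨0, Nat.zero_le _, a, by simp⟩
  | @cons_cons w l a _ ih =>
    obtain ⟨k, hk, b, rfl⟩ := ih (by simpa using hl)
    exact ⟨k + 1, by simpa using hk, b, by simp⟩

theorem take_append_cons_drop_eq_of_forall_eq {w : List α} {i j : ℕ} {b : α} (hij : i ≤ j)
    (h : ∀ x ∈ (w.drop i).take (j - i), x = b) :
    w.take i ++ b :: w.drop i = w.take j ++ b :: w.drop j := by
  set t := (w.drop i).take (j - i)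
  have hdrop : w.drop i = t ++ w.drop j := by
    rw [← take_append_drop (j - i) (w.drop i), drop_drop, Nat.add_sub_cancel' hij]
  have htake : w.take j = w.take i ++ t := by
    rw [← Nat.add_sub_cancel' hij, take_add]
  rw [hdrop, htake, eq_replicate_iff.2 ⟨rfl, h⟩, append_assoc, ← cons_append,
    ← replicate_succ, replicate_succ', append_assoc, singleton_append]

end List

open List

def momentFrom : ℕ → List Bool → ℕ
  | _, [] => 0
  | p, b :: t => p * b.toNat + momentFrom (p + 1) t

theorem momentFrom_succ (l : List Bool) (p : ℕ) :
    momentFrom (p + 1) l = momentFrom p l + l.count true := by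
  induction l generalizing p with
  | nil => rfl
  | cons b t ih =>
    cases b
    · simp [momentFrom, ih]
    · simp [momentFrom, ih]; ring

theorem momentFrom_ofFn {n : ℕ} (x : Fin n → Bool) (p : ℕ) :
    momentFrom p (ofFn x) = ∑ i : Fin n, (p + i) * (x i).toNat := by
  induction n generalizing p with
  | zero => rfl
  | succ n ih =>
    rw [ofFn_succ, momentFrom, ih, Fin.sum_univ_succ]
    simp only [Fin.val_zero, Fin.val_succ, add_zero, add_assoc, add_comm 1]

theorem mom_eq_momentFrom_ofFn {n : ℕ} (x : Fin n → Bool) : mom x = momentFrom 1 (ofFn x) := by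
  rw [momentFrom_ofFn, mom]
  refine Finset.sum_congr rfl fun i _ => ?_
  cases x i <;> simp [add_comm]

/-- The increase of the moment (with weights starting at `1`) when `b` is inserted into `w` at
position `k`: the inserted bit contributes `k + 1`, and each `1` behind it moves up by one. -/
def insertionGain (w : List Bool) (k : ℕ) (b : Bool) : ℕ :=
  (w.drop k).count true + (k + 1) * b.toNat

theorem momentFrom_take_append_cons_drop {w : List Bool} {k : ℕ} (hk : k ≤ w.length)
    (b : Bool) (p : ℕ) :
    momentFrom p (w.take k ++ b :: w.drop k) = momentFrom p w + (w.drop k).count true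
      + (p + k) * b.toNat := by
  induction w generalizing k p with
  | nil =>
    obtain rfl : k = 0 := by simpa using hk
    simp [momentFrom]
  | cons a t ih =>
    cases k with
    | zero =>
      rw [take_zero, drop_zero, nil_append, momentFrom, momentFrom_succ, Nat.add_zero]
      ring
    | succ k =>
      simp only [take_succ_cons, drop_succ_cons, cons_append, momentFrom]
      rw [ih (by simpa using hk)]
      ring

theorem insertionGain_le {w : List Bool} {k : ℕ} (hk : k ≤ w.length) (b : Bool) :
    insertionGain w k b ≤ w.length + 1 := by
  have hcount := (w.drop k).count_le_length (a := true)
  rw [length_drop] at hcount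
  cases b <;> simp only [insertionGain, Bool.toNat_false, Bool.toNat_true] <;> omega

theorem take_append_cons_drop_eq_of_insertionGain_eq {w : List Bool} {i j : ℕ} {b c : Bool}
    (hij : i ≤ j) (h : insertionGain w i b = insertionGain w j c) :
    w.take i ++ b :: w.drop i = w.take j ++ c :: w.drop j := by
  set t := (w.drop i).take (j - i)
  have hdrop : w.drop i = t ++ w.drop j := by
    rw [← take_append_drop (j - i) (w.drop i), drop_drop, Nat.add_sub_cancel' hij]
  have ht : t.count true ≤ t.length := count_le_length
  have ht' : t.length ≤ j - i := length_take_le _ _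
  have hgain : t.count true + (i + 1) * b.toNat = (j + 1) * c.toNat := by
    unfold insertionGain at h
    rw [hdrop, count_append] at h
    omega
  cases b <;> cases c <;>
    simp only [Bool.toNat_true, Bool.toNat_false, mul_one, mul_zero, add_zero] at hgain
  · have hnone : true ∉ t := count_eq_zero.1 hgain
    exact take_append_cons_drop_eq_of_forall_eq hij fun x hx =>
      Bool.eq_false_iff.2 fun hxt => hnone (hxt ▸ hx)
  · omega
  · omega
  · have hall : t.count true = t.length := by omega
    exact take_append_cons_drop_eq_of_forall_eq hij fun x hx => (count_eq_length.1 hall x hx).symm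

theorem mom_eq_of_ofFn_eq_take_append_cons_drop {n : ℕ} {x : Fin n → Bool} {w : List Bool}
    {k : ℕ} {b : Bool} (hk : k ≤ w.length) (hx : ofFn x = w.take k ++ b :: w.drop k) :
    mom x = momentFrom 1 w + insertionGain w k b := by
  rw [mom_eq_momentFrom_ofFn, hx, momentFrom_take_append_cons_drop hk, insertionGain]
  ring

/-- Levenshtein: for `m ≥ n + 1`, two distinct words of length `n` with
the same moment residue `a` mod `m` have no common subsequence of length `n − 1`;
the Varshamov–Tenengolts code corrects a single deletion. -/
theorem stmt13 {n : ℕ} (hn : 1 ≤ n) (m a : ℕ) (hm : n + 1 ≤ m)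
    (x y : Fin n → Bool) (hxy : x ≠ y)
    (hx : mom x ≡ a [MOD m]) (hy : mom y ≡ a [MOD m]) :
    ¬ ∃ w : List Bool, w.length = n - 1 ∧
      w.Sublist (List.ofFn x) ∧ w.Sublist (List.ofFn y) := by
  rintro ⟨w, hw, hwx, hwy⟩
  have hlen : ∀ z : Fin n → Bool, (ofFn z).length = w.length + 1 := by
    intro z; rw [length_ofFn]; omega
  obtain ⟨i, hi, b, hxw⟩ := exists_eq_take_append_cons_drop_of_sublist hwx (hlen x)
  obtain ⟨j, hj, c, hyw⟩ := exists_eq_take_append_cons_drop_of_sublist hwy (hlen y)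
  have hgain : insertionGain w i b = insertionGain w j c := by
    have hmod : momentFrom 1 w + insertionGain w i b ≡ momentFrom 1 w + insertionGain w j c
        [MOD m] := by
      rw [← mom_eq_of_ofFn_eq_take_append_cons_drop hi hxw,
        ← mom_eq_of_ofFn_eq_take_append_cons_drop hj hyw]
      exact hx.trans hy.symm
    have hgain_i := insertionGain_le hi b
    have hgain_j := insertionGain_le hj c
    exact (Nat.ModEq.add_left_cancel' _ hmod).eq_of_lt_of_lt (by omega) (by omega)
  refine hxy (ofFn_injective ?_)
  rw [hxw, hyw]
  rcases le_total i j with hij | hji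
  · exact take_append_cons_drop_eq_of_insertionGain_eq hij hgain
  · exact (take_append_cons_drop_eq_of_insertionGain_eq hji hgain.symm).symm
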